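/- arXiv:2209.01588 — 3 statements merged into one kernel-verified Lean document; each statement's English description precedes it below -/
import Mathlib

section
/- Let V be a finite-dimensional real inner product space, a a symmetric positive definite bilinear form on V, and A the operator with (Av, w) = a(v,w). Suppose V₁, ..., V_N are subspaces of V with inclusion maps J_i : V_i → V, and let A_i : V_i → V_i be defined by (A_i v, w) = a(v,w) for v, w ∈ V_i. Then the additive Schwarz operator M⁻¹ = Σ_i J_i A_i⁻¹ J_iᵗ is symmetric positive semidefinite with respect to (·,·), and it is positive definite if Σ_i V_i = V. -/
open RealInnerProductSpace

/-!
Each summand `J_i A_i⁻¹ J_iᵗ` is `A_i⁻¹ : V_i → V_i`, which is positive because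
`(A_i⁻¹ v, w) = a(A_i⁻¹ v, A_i⁻¹ w)`, conjugated by the inclusion `J_i`; such a conjugate is again
positive, hence so is the sum. Moreover `(M⁻¹ v, v) = Σ_i a(A_i⁻¹ J_iᵗ v, A_i⁻¹ J_iᵗ v)`, so if it
vanishes then every `J_iᵗ v` vanishes, i.e. `v` is orthogonal to every `V_i`, hence to `Σ_i V_i = V`.
-/

section

variable {V : Type*} [NormedAddCommGroup V] [InnerProductSpace ℝ V]

section FormInverse

-- The hypothesis `a (T v) w = ⟪v, w⟫` says `T = A_K⁻¹` for the operator `(A_K v, w) = a(v, w)` on `K`.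
variable (a : V →ₗ[ℝ] V →ₗ[ℝ] ℝ) {K : Submodule ℝ V} {T : K →ₗ[ℝ] K}

theorem isSymmetric_of_form_inverse (hsymm : ∀ v w, a v w = a w v)
    (hT : ∀ v w : K, a (T v) w = ⟪v, w⟫) : T.IsSymmetric := fun v w => by
  rw [real_inner_comm, ← hT w (T v), hsymm, hT]

theorem isPositive_of_form_inverse (hsymm : ∀ v w, a v w = a w v)
    (hnonneg : ∀ v, 0 ≤ a v v) (hT : ∀ v w : K, a (T v) w = ⟪v, w⟫) : T.IsPositive :=
  (T.isPositive_iff).mpr ⟨isSymmetric_of_form_inverse a hsymm hT, fun v => by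
    rw [real_inner_comm, ← hT v (T v)]
    exact hnonneg _⟩

theorem eq_zero_of_inner_form_inverse_self_eq_zero (hpos : ∀ v, v ≠ 0 → 0 < a v v)
    (hT : ∀ v w : K, a (T v) w = ⟪v, w⟫) {v : K} (h : ⟪T v, v⟫ = 0) : v = 0 := by
  have hTv : (T v : V) = 0 := by
    by_contra hne
    rw [real_inner_comm, ← hT v (T v)] at h
    exact (hpos _ hne).ne' h
  rw [← inner_self_eq_zero (𝕜 := ℝ), ← hT v v, hTv, map_zero, LinearMap.zero_apply]

end FormInverse

section Compression

variable {K : Submodule ℝ V} {P : V →ₗ[ℝ] K}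

theorem inner_subtype_comp_comp_apply (hP : ∀ v (w : K), ⟪P v, w⟫ = ⟪v, (w : V)⟫)
    (S : K →ₗ[ℝ] K) (v w : V) : ⟪(K.subtype ∘ₗ S ∘ₗ P) v, w⟫ = ⟪S (P v), P w⟫ := by
  rw [real_inner_comm, LinearMap.comp_apply, LinearMap.comp_apply, Submodule.subtype_apply,
    ← hP w, real_inner_comm]

theorem LinearMap.IsPositive.subtype_comp_comp {S : K →ₗ[ℝ] K} (hS : S.IsPositive)
    (hP : ∀ v (w : K), ⟪P v, w⟫ = ⟪v, (w : V)⟫) : (K.subtype ∘ₗ S ∘ₗ P).IsPositive := by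
  refine (LinearMap.isPositive_iff _).mpr ⟨fun v w => ?_, fun v => ?_⟩
  · rw [inner_subtype_comp_comp_apply hP, real_inner_comm _ v, inner_subtype_comp_comp_apply hP,
      hS.isSymmetric, real_inner_comm]
  · rw [inner_subtype_comp_comp_apply hP]
    exact hS.inner_nonneg_left _

theorem mem_orthogonal_of_apply_eq_zero (hP : ∀ v (w : K), ⟪P v, w⟫ = ⟪v, (w : V)⟫) {v : V}
    (h : P v = 0) : v ∈ Kᗮ :=
  (K.mem_orthogonal' v).mpr fun w hw => by rw [← hP v ⟨w, hw⟩, h, inner_zero_left]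

end Compression

theorem inner_sum_subtype_comp_comp_self_pos {ι : Type*} [Fintype ι] {K : ι → Submodule ℝ V}
    (hK : ⨆ i, K i = ⊤) {P : ∀ i, V →ₗ[ℝ] K i}
    (hP : ∀ i v (w : K i), ⟪P i v, w⟫ = ⟪v, (w : V)⟫) {S : ∀ i, K i →ₗ[ℝ] K i}
    (hS : ∀ i, (S i).IsPositive) (hS_def : ∀ i (x : K i), ⟪S i x, x⟫ = 0 → x = 0)
    {v : V} (hv : v ≠ 0) : 0 < ⟪(∑ i, (K i).subtype ∘ₗ S i ∘ₗ P i) v, v⟫ := by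
  have hterm_nonneg : ∀ i ∈ Finset.univ, 0 ≤ ⟪S i (P i v), P i v⟫ :=
    fun i _ => (hS i).inner_nonneg_left _
  rw [LinearMap.sum_apply, sum_inner]
  simp only [inner_subtype_comp_comp_apply (hP _)]
  refine (Finset.sum_nonneg hterm_nonneg).lt_of_ne fun hsum => hv ?_
  have hPv : ∀ i, P i v = 0 := fun i =>
    hS_def i _ ((Finset.sum_eq_zero_iff_of_nonneg hterm_nonneg).mp hsum.symm i (Finset.mem_univ i))
  have hv_perp : v ∈ (⨆ i, K i)ᗮ := by
    rw [← Submodule.iInf_orthogonal, Submodule.mem_iInf]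
    exact fun i => mem_orthogonal_of_apply_eq_zero (hP i) (hPv i)
  rwa [hK, Submodule.top_orthogonal_eq_bot, Submodule.mem_bot] at hv_perp

end

theorem stmt_1_general {V : Type*} [NormedAddCommGroup V] [InnerProductSpace ℝ V]
    (a : V →ₗ[ℝ] V →ₗ[ℝ] ℝ) (hsymm : ∀ v w, a v w = a w v)
    (hpos : ∀ v, v ≠ 0 → 0 < a v v)
    (N : ℕ) (Vi : Fin N → Submodule ℝ V)
    (Jt : ∀ i, V →ₗ[ℝ] Vi i)
    (hJt : ∀ i (v : V) (w : Vi i), ⟪Jt i v, w⟫ = ⟪v, (w : V)⟫)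
    (Ainv : ∀ i, Vi i →ₗ[ℝ] Vi i)
    (hAinv : ∀ i (v w : Vi i), a ((Ainv i v : V)) ((w : V)) = ⟪v, w⟫)
    (Minv : V →ₗ[ℝ] V)
    (hM : Minv = ∑ i, (Vi i).subtype ∘ₗ (Ainv i) ∘ₗ (Jt i)) :
    (∀ v w, ⟪Minv v, w⟫ = ⟪v, Minv w⟫) ∧
    (∀ v, 0 ≤ ⟪Minv v, v⟫) ∧
    ((⨆ i, Vi i) = ⊤ → ∀ v, v ≠ 0 → 0 < ⟪Minv v, v⟫) := by
  have hnonneg : ∀ v, 0 ≤ a v v := fun v => by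
    rcases eq_or_ne v 0 with rfl | hv
    · simp
    · exact (hpos v hv).le
  have hAinv_pos : ∀ i, (Ainv i).IsPositive := fun i =>
    isPositive_of_form_inverse a hsymm hnonneg (hAinv i)
  have hM_pos : Minv.IsPositive :=
    hM ▸ LinearMap.isPositive_sum _ fun i _ => (hAinv_pos i).subtype_comp_comp (hJt i)
  refine ⟨hM_pos.isSymmetric, hM_pos.inner_nonneg_left, fun hspan v hv => ?_⟩
  subst hM
  exact inner_sum_subtype_comp_comp_self_pos hspan hJt hAinv_pos
    (fun i _ => eq_zero_of_inner_form_inverse_self_eq_zero a hpos (hAinv i)) hv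

/-- The additive Schwarz operator `M⁻¹ = Σ_i J_i A_i⁻¹ J_iᵗ` is symmetric positive
semidefinite w.r.t. the inner product, and positive definite if the subspaces span `V`. -/
theorem stmt_1 {V : Type*} [NormedAddCommGroup V] [InnerProductSpace ℝ V]
    [FiniteDimensional ℝ V]
    (a : V →ₗ[ℝ] V →ₗ[ℝ] ℝ) (hsymm : ∀ v w, a v w = a w v)
    (hpos : ∀ v, v ≠ 0 → 0 < a v v)
    (A : V →ₗ[ℝ] V) (hA : ∀ v w, ⟪A v, w⟫ = a v w)
    (N : ℕ) (Vi : Fin N → Submodule ℝ V)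
    (Jt : ∀ i, V →ₗ[ℝ] Vi i)
    (hJt : ∀ i (v : V) (w : Vi i), ⟪Jt i v, w⟫ = ⟪v, (w : V)⟫)
    (Ainv : ∀ i, Vi i →ₗ[ℝ] Vi i)
    (hAinv : ∀ i (v w : Vi i), a ((Ainv i v : V)) ((w : V)) = ⟪v, w⟫)
    (Minv : V →ₗ[ℝ] V)
    (hM : Minv = ∑ i, (Vi i).subtype ∘ₗ (Ainv i) ∘ₗ (Jt i)) :
    (∀ v w, ⟪Minv v, w⟫ = ⟪v, Minv w⟫) ∧
    (∀ v, 0 ≤ ⟪Minv v, v⟫) ∧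
    ((⨆ i, Vi i) = ⊤ → ∀ v, v ≠ 0 → 0 < ⟪Minv v, v⟫) :=
  stmt_1_general a hsymm hpos N Vi Jt hJt Ainv hAinv Minv hM
end

section
/- Suppose V = Σ_{i=1}^N V_i is a (not necessarily direct) decomposition into subspaces and every v ∈ V admits a decomposition v = Σ_i v_i with v_i ∈ V_i and Σ_i a(v_i, v_i) ≤ C₀ · a(v, v). Then the smallest eigenvalue of the additive Schwarz operator P = Σ_i P_i (P_i the a-orthogonal projections) satisfies λ_min(P) ≥ 1/C₀. -/
/-!
Let `P v = μ v` with `v ≠ 0` and let `v = Σ f i` be a stable decomposition. Since `P i` is the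
`a`-orthogonal projection onto `V i`, `a v v = Σ a (P i v) (f i)` and
`Σ a (P i v) (P i v) = a v (P v) = μ a v v`. Cauchy–Schwarz for the form `Σ a (x i) (y i)` on
`ι → V` then gives `a v v ^ 2 ≤ μ a v v · Σ a (f i) (f i) ≤ μ C₀ (a v v) ^ 2`, i.e. `1 ≤ μ C₀`.
-/

namespace LinearMap.BilinForm

variable {R ι : Type*} {M : ι → Type*} [CommRing R] [Fintype ι]
  [∀ i, AddCommGroup (M i)] [∀ i, Module R (M i)]

def pi (B : ∀ i, LinearMap.BilinForm R (M i)) : LinearMap.BilinForm R (∀ i, M i) :=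
  ∑ i, (B i).compl₁₂ (LinearMap.proj i) (LinearMap.proj i)

@[simp]
theorem pi_apply (B : ∀ i, LinearMap.BilinForm R (M i)) (x y : ∀ i, M i) :
    BilinForm.pi B x y = ∑ i, B i (x i) (y i) := by
  simp [pi, LinearMap.sum_apply]

theorem IsSymm.pi {B : ∀ i, LinearMap.BilinForm R (M i)} (hB : ∀ i, (B i).IsSymm) :
    (BilinForm.pi B).IsSymm :=
  isSymm_def.mpr fun x y => by simp only [pi_apply, (hB _).eq]

end LinearMap.BilinForm

section StableDecomposition

variable {V ι : Type*} [AddCommGroup V] [Module ℝ V] [Fintype ι]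
  {a : LinearMap.BilinForm ℝ V} {W : ι → Submodule ℝ V} {P : ι → V →ₗ[ℝ] V}

theorem sum_apply_proj_of_mem (hP : ∀ i v, ∀ w ∈ W i, a (P i v) w = a v w) (v : V)
    {f : ι → V} (hf : ∀ i, f i ∈ W i) : ∑ i, a (P i v) (f i) = a v (∑ i, f i) := by
  simp only [map_sum, hP _ _ _ (hf _)]

theorem sum_apply_proj_self (hP : ∀ i v, P i v ∈ W i ∧ ∀ w ∈ W i, a (P i v) w = a v w)
    (v : V) : ∑ i, a (P i v) (P i v) = a v ((∑ i, P i) v) := by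
  rw [LinearMap.sum_apply,
    ← sum_apply_proj_of_mem (fun i v => (hP i v).2) v fun i => (hP i v).1]

theorem sq_apply_self_le_of_decomposition (hsymm : a.IsSymm) (hnonneg : ∀ v, 0 ≤ a v v)
    (hP : ∀ i v, P i v ∈ W i ∧ ∀ w ∈ W i, a (P i v) w = a v w)
    {v : V} {f : ι → V} (hf : ∀ i, f i ∈ W i) (hv : v = ∑ i, f i) :
    a v v ^ 2 ≤ a v ((∑ i, P i) v) * ∑ i, a (f i) (f i) := by
  have hcs := (LinearMap.BilinForm.pi fun _ : ι => a).apply_sq_le_of_symm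
    (fun x => by simpa only [LinearMap.BilinForm.pi_apply] using
      Finset.sum_nonneg fun i _ => hnonneg (x i))
    (LinearMap.BilinForm.isSymm_iff.mp (.pi fun _ => hsymm)) (fun i => P i v) f
  simp only [LinearMap.BilinForm.pi_apply] at hcs
  rwa [sum_apply_proj_of_mem (fun i v => (hP i v).2) v hf, ← hv, sum_apply_proj_self hP] at hcs

end StableDecomposition

theorem stmt_8_general {V : Type*} [AddCommGroup V] [Module ℝ V]
    (a : V →ₗ[ℝ] V →ₗ[ℝ] ℝ) (hsymm : ∀ v w, a v w = a w v)
    (hpos : ∀ v, v ≠ 0 → 0 < a v v)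
    (N : ℕ) (Vi : Fin N → Submodule ℝ V)
    (P : Fin N → (V →ₗ[ℝ] V))
    (hproj : ∀ i v, P i v ∈ Vi i ∧ ∀ w ∈ Vi i, a (P i v) w = a v w)
    (C₀ : ℝ) (hC₀ : 0 < C₀)
    (hstable : ∀ v : V, ∃ f : Fin N → V, (∀ i, f i ∈ Vi i) ∧ v = ∑ i, f i ∧
      ∑ i, a (f i) (f i) ≤ C₀ * a v v) :
    ∀ μ : ℝ, Module.End.HasEigenvalue (∑ i, P i) μ → 1 / C₀ ≤ μ := by
  intro μ hμ
  obtain ⟨v, hv⟩ := hμ.exists_hasEigenvector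
  have hvv : 0 < a v v := hpos v hv.2
  have hnonneg (w : V) : 0 ≤ a w w := by
    rcases eq_or_ne w 0 with rfl | hw
    · simp
    · exact (hpos w hw).le
  have hPv : a v ((∑ i, P i) v) = μ * a v v := by
    rw [hv.apply_eq_smul, map_smul, smul_eq_mul]
  have hμvv : 0 ≤ μ * a v v :=
    hPv ▸ sum_apply_proj_self hproj v ▸ Finset.sum_nonneg fun i _ => hnonneg _
  obtain ⟨f, hf, hvf, hstab⟩ := hstable v
  have hcs := sq_apply_self_le_of_decomposition
    (LinearMap.BilinForm.isSymm_def.mpr hsymm) hnonneg hproj hf hvf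
  rw [hPv] at hcs
  have hsq : 1 * a v v ^ 2 ≤ μ * C₀ * a v v ^ 2 := calc
    1 * a v v ^ 2 ≤ μ * a v v * ∑ i, a (f i) (f i) := by rwa [one_mul]
    _ ≤ μ * a v v * (C₀ * a v v) := mul_le_mul_of_nonneg_left hstab hμvv
    _ = μ * C₀ * a v v ^ 2 := by ring
  rw [div_le_iff₀ hC₀]
  exact le_of_mul_le_mul_right hsq (pow_pos hvv 2)

/-- Stable decomposition (Lions' lemma): if every `v` decomposes as `v = Σ v_i`, `v_i ∈ V_i`,
with `Σ a(v_i, v_i) ≤ C₀ a(v, v)`, then every eigenvalue of `P = Σ P_i` is `≥ 1/C₀`. -/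
theorem stmt_8 {V : Type*} [AddCommGroup V] [Module ℝ V] [FiniteDimensional ℝ V]
    (a : V →ₗ[ℝ] V →ₗ[ℝ] ℝ) (hsymm : ∀ v w, a v w = a w v)
    (hpos : ∀ v, v ≠ 0 → 0 < a v v)
    (N : ℕ) (Vi : Fin N → Submodule ℝ V)
    (P : Fin N → (V →ₗ[ℝ] V))
    (hproj : ∀ i v, P i v ∈ Vi i ∧ ∀ w ∈ Vi i, a (P i v) w = a v w)
    (C₀ : ℝ) (hC₀ : 0 < C₀)
    (hstable : ∀ v : V, ∃ f : Fin N → V, (∀ i, f i ∈ Vi i) ∧ v = ∑ i, f i ∧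
      ∑ i, a (f i) (f i) ≤ C₀ * a v v) :
    ∀ μ : ℝ, Module.End.HasEigenvalue (∑ i, P i) μ → 1 / C₀ ≤ μ :=
  stmt_8_general a hsymm hpos N Vi P hproj C₀ hC₀ hstable
end

section
/- Let N be the lowest-order hexahedral Nédélec space N = { (a₁+a₂y+a₃z+a₄yz, b₁+b₂z+b₃x+b₄zx, c₁+c₂x+c₃y+c₄xy) } on the reference cube [0,1]³. A vector field v ∈ N is uniquely determined by its twelve edge degrees of freedom, namely the integrals of the tangential component of v along the twelve edges of the cube; i.e., if all twelve edge integrals of v vanish, then v = 0. -/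
/-! Each component of a Nédélec field is constant along the edges parallel to its own axis, so
its four edge integrals are its values on those edges. As a function of the other two
coordinates the component is bilinear, and a bilinear function is the bilinear interpolation of
its values at the four corners of the unit square; so it vanishes identically. -/

theorem bilinear_eq_zero_of_eq_zero_on_corners {a b c d : ℝ}
    (h : ∀ y ∈ ({0, 1} : Set ℝ), ∀ z ∈ ({0, 1} : Set ℝ), a + b * y + c * z + d * y * z = 0)
    (y z : ℝ) : a + b * y + c * z + d * y * z = 0 := by
  have h0 : (0 : ℝ) ∈ ({0, 1} : Set ℝ) := by simp
  have h1 : (1 : ℝ) ∈ ({0, 1} : Set ℝ) := by simp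
  linear_combination (1 - y) * (1 - z) * h 0 h0 0 h0 + y * (1 - z) * h 1 h1 0 h0 +
    (1 - y) * z * h 0 h0 1 h1 + y * z * h 1 h1 1 h1

/-- Unisolvence of the lowest-order hexahedral Nédélec element on the reference cube
`[0,1]³`: if all twelve edge integrals of the tangential component vanish, then `v = 0`. -/
theorem stmt_11 (a₁ a₂ a₃ a₄ b₁ b₂ b₃ b₄ c₁ c₂ c₃ c₄ : ℝ)
    (f : (Fin 3 → ℝ) → (Fin 3 → ℝ))
    (hf : f = fun p => ![a₁ + a₂ * p 1 + a₃ * p 2 + a₄ * p 1 * p 2,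
                         b₁ + b₂ * p 2 + b₃ * p 0 + b₄ * p 2 * p 0,
                         c₁ + c₂ * p 0 + c₃ * p 1 + c₄ * p 0 * p 1])
    (hx : ∀ y ∈ ({0, 1} : Set ℝ), ∀ z ∈ ({0, 1} : Set ℝ),
      (∫ t in (0:ℝ)..1, f ![t, y, z] 0) = 0)
    (hy : ∀ x ∈ ({0, 1} : Set ℝ), ∀ z ∈ ({0, 1} : Set ℝ),
      (∫ t in (0:ℝ)..1, f ![x, t, z] 1) = 0)
    (hz : ∀ x ∈ ({0, 1} : Set ℝ), ∀ y ∈ ({0, 1} : Set ℝ),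
      (∫ t in (0:ℝ)..1, f ![x, y, t] 2) = 0) :
    f = 0 := by
  subst hf
  funext p i
  fin_cases i
  · simpa using bilinear_eq_zero_of_eq_zero_on_corners
      (fun y hy z hz => by simpa using hx y hy z hz) (p 1) (p 2)
  · simpa using bilinear_eq_zero_of_eq_zero_on_corners
      (fun z hz x hx => by simpa using hy x hx z hz) (p 2) (p 0)
  · simpa using bilinear_eq_zero_of_eq_zero_on_corners
      (fun x hx y hy => by simpa using hz x hx y hy) (p 0) (p 1)
end
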